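/- Suppose (i) for every action a and aspect sequences ᾱ, β̄, if d(ᾱ,β̄) and a has aspect sequence β̄, then for every proposition X and every world s, (⟨ᾱ⟩X)(s) ↔ (⟨ᾱ⟩X)(a(s)); and (ii) for every fluent p and aspect sequence ᾱ, if p has aspect sequence ᾱ then there exists a proposition q such that for all worlds s, p(s) ↔ (⟨ᾱ⟩q)(s). Then the sequential non-interference axiom holds: for every fluent p, action a, and aspect sequences ᾱ, β̄, if p has aspect sequence ᾱ, a has aspect sequence β̄, and d(ᾱ,β̄), then for all worlds s, p(s) ↔ p(a(s)). -/

import Mathlib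

/-- The modal operator `⟨α⟩` determined by the accessibility relation `R α`. -/
def Dia {S A : Type*} (R : A → S → S → Prop) (α : A) (X : S → Prop) : S → Prop :=
  fun s => ∃ t : S, R α s t ∧ X t

/-- `⟨αs⟩X = ⟨α₁⟩⟨α₂⟩⋯⟨αₙ⟩X` for a list `αs = (α₁,…,αₙ)`, with the empty list
giving the identity operator. -/
def DiaSeq {S A : Type*} (R : A → S → S → Prop) : List A → (S → Prop) → S → Prop
  | [], X => X
  | α :: rest, X => Dia R α (DiaSeq R rest X)

/-- Sequential modal formalism, `⟨⟩` version: the sequential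
non-interference axiom follows from the two modal axioms. -/
theorem seq_modal_dia_noninterference
    {S A : Type*} (R : A → S → S → Prop) (d : List A → List A → Prop)
    (fluentAspect : (S → Prop) → List A → Prop)
    (actionAspect : (S → S) → List A → Prop)
    (h1 : ∀ (a : S → S) (αs βs : List A), d αs βs → actionAspect a βs →
      ∀ (X : S → Prop) (s : S), DiaSeq R αs X s ↔ DiaSeq R αs X (a s))
    (h2 : ∀ (p : S → Prop) (αs : List A), fluentAspect p αs →
      ∃ q : S → Prop, ∀ s : S, p s ↔ DiaSeq R αs q s) :
    ∀ (p : S → Prop) (a : S → S) (αs βs : List A),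
      fluentAspect p αs → actionAspect a βs → d αs βs →
      ∀ s : S, p s ↔ p (a s) := by
  intro p a αs βs hp ha hd s
  obtain ⟨q, hq⟩ := h2 p αs hp
  rw [hq, hq, h1 a αs βs hd ha]
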